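/- arXiv:math/0410260 — 2 statements merged into one kernel-verified Lean document; each statement's English description precedes it below -/
import Mathlib

section
/- Let Γ be a compact manifold and η a closed 2-form on Γ × (R,∞) whose pointwise norm with respect to the cone metric g_V = dr^2 + r^2 g_Γ satisfies |η|_{g_V} = O(r^λ) as r → ∞ with λ < −2. Then [η] = 0 in H^2(Γ × (R,∞), R) ≅ H^2(Γ, R). -/
open Set

/-!
STATEMENT 11: Let Γ be compact and η a closed 2-form on Γ × (R,∞) with
|η|_{g_V} = O(r^λ) as r → ∞, λ < −2, for the cone metric g_V = dr² + r² g_Γ.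
Then [η] = 0 in H²(Γ × (R,∞), ℝ) ≅ H²(Γ, ℝ).

Modelling (tangential/dr decomposition, as in the companion statements):
`A k` is the Banach space of smooth k-forms on Γ with exterior derivative `dΓ`;
a cone 2-form `(η₀, η₁)` represents `η₀(r) + dr ∧ η₁(r)`, with
`d(η₀,η₁) = (dΓ η₀, ∂_r η₀ − dΓ η₁)`.  The decay |η|_{g_V} = O(r^λ) is
`‖η₀(r)‖ ≤ C r^{λ+2}`, `‖η₁(r)‖ ≤ C r^{λ+1}` (slicewise norms).  Vanishing of the
de Rham class means η is exact on Γ × (R,∞).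
-/

theorem decaying_closed_two_form_on_AC_end_is_exact
    {A : ℕ → Type*} [∀ k, NormedAddCommGroup (A k)] [∀ k, NormedSpace ℝ (A k)]
    [∀ k, CompleteSpace (A k)]
    (dΓ : ∀ k, A k →L[ℝ] A (k + 1))
    (R lam : ℝ) (hR : 0 < R) (hlam : lam < -2)
    (η₀ : ℝ → A 2) (η₁ : ℝ → A 1)
    (hcont₀ : ContinuousOn η₀ (Ioi R)) (hcont₁ : ContinuousOn η₁ (Ioi R))
    -- d η = 0:
    (hclosed₀ : ∀ r ∈ Ioi R, dΓ 2 (η₀ r) = 0)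
    (hclosed₁ : ∀ r ∈ Ioi R, HasDerivAt η₀ (dΓ 1 (η₁ r)) r)
    -- |η|_{g_V} = O(r^λ) as r → ∞:
    (C : ℝ)
    (hdecay₀ : ∀ r ∈ Ioi R, ‖η₀ r‖ ≤ C * r ^ (lam + 2))
    (hdecay₁ : ∀ r ∈ Ioi R, ‖η₁ r‖ ≤ C * r ^ (lam + 1)) :
    ∃ (σ₀ : ℝ → A 1) (σ₁ : ℝ → A 0),
      (∀ r ∈ Ioi R, dΓ 1 (σ₀ r) = η₀ r) ∧
      (∀ r ∈ Ioi R, HasDerivAt σ₀ (η₁ r + dΓ 0 (σ₁ r)) r) := by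

  -- integrability facts
  have hCnn : ∀ r ∈ Ioi R, (0:ℝ) ≤ C * r ^ (lam + 1) := fun r hr =>
    le_trans (norm_nonneg _) (hdecay₁ r hr)
  have hrpow : MeasureTheory.IntegrableOn (fun s : ℝ => s ^ (lam + 1)) (Ioi R) :=
    integrableOn_Ioi_rpow_of_lt (by linarith) hR
  have hmeas₁ : MeasureTheory.AEStronglyMeasurable η₁
      (MeasureTheory.volume.restrict (Ioi R)) :=
    hcont₁.aestronglyMeasurable measurableSet_Ioi
  have hInt₁ : MeasureTheory.IntegrableOn η₁ (Ioi R) := by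
    refine MeasureTheory.Integrable.mono' (hrpow.const_mul C) hmeas₁ ?_
    filter_upwards [MeasureTheory.ae_restrict_mem measurableSet_Ioi] with s hs
    exact hdecay₁ s hs
  have hIntd : MeasureTheory.IntegrableOn (fun s => dΓ 1 (η₁ s)) (Ioi R) :=
    ((dΓ 1).integrable_comp hInt₁)
  -- the primitive
  set σ₀ : ℝ → A 1 := fun r =>
    (∫ s in R..r, η₁ s) - ∫ s in Ioi R, η₁ s with hσ₀
  refine ⟨σ₀, fun _ => 0, ?_, ?_⟩
  · -- dΓ σ₀ = η₀
    intro r hr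
    have hrR : R ≤ r := le_of_lt hr
    have hII : IntervalIntegrable η₁ MeasureTheory.volume R r := by
      rw [intervalIntegrable_iff]
      exact hInt₁.mono_set (by rw [uIoc_of_le hrR]; exact Ioc_subset_Ioi_self)
    have h1 : dΓ 1 (σ₀ r)
        = (∫ s in R..r, dΓ 1 (η₁ s)) - ∫ s in Ioi R, dΓ 1 (η₁ s) := by
      rw [hσ₀, map_sub, (dΓ 1).intervalIntegral_comp_comm hII,
        ContinuousLinearMap.integral_comp_comm _ hInt₁]
    -- improper FTC: ∫ (Ioi r) dΓ η₁ = 0 - η₀ r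
    have htend : Filter.Tendsto η₀ Filter.atTop (nhds 0) := by
      have h0 : Filter.Tendsto (fun s : ℝ => C * s ^ (lam + 2)) Filter.atTop (nhds 0) := by
        have := (tendsto_rpow_neg_atTop (y := -(lam + 2)) (by linarith)).const_mul C
        simpa using this
      refine squeeze_zero_norm' ?_ h0
      filter_upwards [Filter.Ioi_mem_atTop R] with s hs using hdecay₀ s hs
    have hFTC : ∀ a ∈ Ioi R, (∫ s in Ioi a, dΓ 1 (η₁ s)) = 0 - η₀ a := by
      intro a ha
      exact MeasureTheory.integral_Ioi_of_hasDerivAt_of_tendsto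
        ((hclosed₁ a ha).continuousAt.continuousWithinAt)
        (fun x hx => hclosed₁ x (mem_Ioi.mpr (lt_trans (mem_Ioi.mp ha) (mem_Ioi.mp hx))))
        (hIntd.mono_set (Ioi_subset_Ioi (le_of_lt ha))) htend
    -- split Ioi R = Ioc R r ∪ Ioi r
    have hsplit : (∫ s in Ioi R, dΓ 1 (η₁ s))
        = (∫ s in Ioc R r, dΓ 1 (η₁ s)) + ∫ s in Ioi r, dΓ 1 (η₁ s) := by
      rw [← MeasureTheory.setIntegral_union (Ioc_disjoint_Ioi le_rfl)
        measurableSet_Ioi (hIntd.mono_set Ioc_subset_Ioi_self)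
        (hIntd.mono_set (Ioi_subset_Ioi hrR)), Ioc_union_Ioi_eq_Ioi hrR]
    have h2 : (∫ s in R..r, dΓ 1 (η₁ s)) = ∫ s in Ioc R r, dΓ 1 (η₁ s) :=
      intervalIntegral.integral_of_le hrR
    rw [h1, h2, hsplit, hFTC r hr]
    abel
  · -- derivative of σ₀ is η₁
    intro r hr
    have hII : IntervalIntegrable η₁ MeasureTheory.volume R r := by
      rw [intervalIntegrable_iff]
      exact hInt₁.mono_set (by rw [uIoc_of_le (le_of_lt hr)]; exact Ioc_subset_Ioi_self)
    have hca : ContinuousAt η₁ r := hcont₁.continuousAt (Ioi_mem_nhds hr)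
    have hd : HasDerivAt (fun u => ∫ s in R..u, η₁ s) (η₁ r) r :=
      intervalIntegral.integral_hasDerivAt_right hII
        (hcont₁.stronglyMeasurableAtFilter isOpen_Ioi r hr)
        hca
    have : HasDerivAt σ₀ (η₁ r) r := hd.sub_const _
    simpa using this
end

section
/- Let Γ be a compact manifold and η = η_0(γ,r) + η_1(γ,r) ∧ dr a closed 2-form on Γ × (0,ε) (with η_0(·,r) ∈ Ω^2(Γ), η_1(·,r) ∈ Ω^1(Γ)) satisfying |η|_{g_V} = O(r^ν) with ν > 0 for the cone metric g_V = dr^2 + r^2 g_Γ. Define σ(γ,r) = −∫_0^r η_1(γ,s) ds. Then σ is a well-defined smooth 1-form with dσ = η, and |σ|_{g_V} = O(r^{ν+1}) as r → 0. -/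
open Set MeasureTheory

/-!
STATEMENT 12: Let Γ be compact and η = η₀ + η₁ ∧ dr a closed 2-form on Γ × (0,ε)
with |η|_{g_V} = O(r^ν), ν > 0.  Define σ(γ,r) = −∫₀^r η₁(γ,s) ds.  Then σ is a
well-defined smooth 1-form with dσ = η and |σ|_{g_V} = O(r^{ν+1}) as r → 0.

Modelling (tangential/dr decomposition): here a cone 2-form is written
`η₀(r) + dr ∧ η̃₁(r)` with `η̃₁ = −η₁` (the paper writes η₁ ∧ dr), so the paper's
σ = −∫₀^r η₁ ds is `σ₀ r = ∫ s in (0,r], η̃₁ s`.  `A k` is the Banach space of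
smooth k-forms on Γ with exterior derivative `dΓ`; closedness of η is `hclosed₀`,
`hclosed₁`; the decay |η|_{g_V} = O(r^ν) is the slicewise bounds `hdecay₀`,
`hdecay₁`, and |σ|_{g_V} = O(r^{ν+1}) is `‖σ₀ r‖ = O(r^{ν+2})`.  The conclusions
are: the integral defining σ converges (well-definedness); dσ = η (tangential
part `dΓ σ₀ = η₀`, dr-part `∂_r σ₀ = η̃₁`); and the decay estimate for σ.
-/

theorem radial_primitive_of_decaying_closed_two_form
    {A : ℕ → Type*} [∀ k, NormedAddCommGroup (A k)] [∀ k, NormedSpace ℝ (A k)]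
    [∀ k, CompleteSpace (A k)]
    (dΓ : ∀ k, A k →L[ℝ] A (k + 1))
    (ε ν C : ℝ) (hε : 0 < ε) (hν : 0 < ν)
    (η₀ : ℝ → A 2) (η₁ : ℝ → A 1)
    (hcont₀ : ContinuousOn η₀ (Ioo 0 ε)) (hcont₁ : ContinuousOn η₁ (Ioo 0 ε))
    -- d η = 0:
    (hclosed₀ : ∀ r ∈ Ioo (0 : ℝ) ε, dΓ 2 (η₀ r) = 0)
    (hclosed₁ : ∀ r ∈ Ioo (0 : ℝ) ε, HasDerivAt η₀ (dΓ 1 (η₁ r)) r)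
    -- |η|_{g_V} = O(r^ν):
    (hdecay₀ : ∀ r ∈ Ioo (0 : ℝ) ε, ‖η₀ r‖ ≤ C * r ^ (ν + 2))
    (hdecay₁ : ∀ r ∈ Ioo (0 : ℝ) ε, ‖η₁ r‖ ≤ C * r ^ (ν + 1)) :
    -- σ is well defined:
    (∀ r ∈ Ioo (0 : ℝ) ε, IntegrableOn η₁ (Ioc 0 r)) ∧
    -- d σ = η:
    (∀ r ∈ Ioo (0 : ℝ) ε, dΓ 1 (∫ s in Ioc (0 : ℝ) r, η₁ s) = η₀ r) ∧
    (∀ r ∈ Ioo (0 : ℝ) ε,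
      HasDerivAt (fun u : ℝ => ∫ s in Ioc (0 : ℝ) u, η₁ s) (η₁ r) r) ∧
    -- |σ|_{g_V} = O(r^{ν+1}):
    (∃ C' : ℝ, ∀ r ∈ Ioo (0 : ℝ) ε, ‖∫ s in Ioc (0 : ℝ) r, η₁ s‖ ≤ C' * r ^ (ν + 2)) := by

  -- C is nonnegative
  have hC : 0 ≤ C := by
    have h2 : ε / 2 ∈ Ioo (0:ℝ) ε := ⟨by linarith, by linarith⟩
    have := (norm_nonneg (η₁ (ε/2))).trans (hdecay₁ _ h2)
    nlinarith [Real.rpow_pos_of_pos (show (0:ℝ) < ε/2 by linarith) (ν + 1)]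
  -- Part 1: integrability
  have hInt : ∀ r ∈ Ioo (0 : ℝ) ε, IntegrableOn η₁ (Ioc 0 r) := by
    intro r hr
    have hsub : Ioc (0:ℝ) r ⊆ Ioo 0 ε := fun s hs => ⟨hs.1, lt_of_le_of_lt hs.2 hr.2⟩
    have hmeas : AEStronglyMeasurable η₁ (volume.restrict (Ioc 0 r)) :=
      (hcont₁.mono hsub).aestronglyMeasurable measurableSet_Ioc
    refine Integrable.mono' (integrable_const (C * r ^ (ν + 1))) hmeas ?_
    filter_upwards [ae_restrict_mem measurableSet_Ioc] with s hs
    calc ‖η₁ s‖ ≤ C * s ^ (ν + 1) := hdecay₁ s (hsub hs)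
      _ ≤ C * r ^ (ν + 1) := by
          have := Real.rpow_le_rpow hs.1.le hs.2 (by positivity : (0:ℝ) ≤ ν + 1)
          nlinarith
  -- decay bound for σ
  have hbound : ∀ r ∈ Ioo (0 : ℝ) ε, ‖∫ s in Ioc (0 : ℝ) r, η₁ s‖ ≤ C * r ^ (ν + 2) := by
    intro r hr
    have hsub : Ioc (0:ℝ) r ⊆ Ioo 0 ε := fun s hs => ⟨hs.1, lt_of_le_of_lt hs.2 hr.2⟩
    have h1 : ‖∫ s in Ioc (0 : ℝ) r, η₁ s‖ ≤ (C * r ^ (ν + 1)) * (volume (Ioc (0:ℝ) r)).toReal := by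
      refine norm_setIntegral_le_of_norm_le_const measure_Ioc_lt_top ?_
      intro s hs
      calc ‖η₁ s‖ ≤ C * s ^ (ν + 1) := hdecay₁ s (hsub hs)
        _ ≤ C * r ^ (ν + 1) := by
            have := Real.rpow_le_rpow hs.1.le hs.2 (by positivity : (0:ℝ) ≤ ν + 1)
            nlinarith
    have hvol : (volume (Ioc (0:ℝ) r)).toReal = r := by
      simp [Real.volume_Ioc, hr.1.le]
    rw [hvol] at h1
    have hs : r ^ (ν + 2) = r ^ (ν + 1) * r ^ (1:ℝ) := by
      rw [← Real.rpow_add hr.1]; ring_nf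
    calc ‖∫ s in Ioc (0 : ℝ) r, η₁ s‖ ≤ C * r ^ (ν + 1) * r := h1
      _ = C * r ^ (ν + 2) := by rw [hs, Real.rpow_one]; ring
  -- Part 3: derivative
  have hDeriv : ∀ r ∈ Ioo (0 : ℝ) ε,
      HasDerivAt (fun u : ℝ => ∫ s in Ioc (0 : ℝ) u, η₁ s) (η₁ r) r := by
    intro r hr
    set a := r / 2 with ha_def
    have ha : a ∈ Ioo (0:ℝ) ε := ⟨by simp [ha_def]; linarith [hr.1], by
      have := hr.2; simp only [ha_def]; linarith [hr.1]⟩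
    have har : a < r := by simp [ha_def]; linarith [hr.1]
    have hnhds : Ioo a ε ∈ nhds r := Ioo_mem_nhds har hr.2
    have hii : IntervalIntegrable η₁ volume a r := by
      have : IntegrableOn η₁ (Set.uIcc a r) := by
        refine (hInt r hr).mono_set ?_
        rw [Set.uIcc_of_le har.le]
        exact fun s hs => ⟨lt_of_lt_of_le ha.1 hs.1, hs.2⟩
      exact this.intervalIntegrable
    have hd : HasDerivAt (fun u : ℝ => ∫ s in a..u, η₁ s) (η₁ r) r := by
      refine intervalIntegral.integral_hasDerivAt_right hii ?_ ?_
      · exact ⟨Ioo 0 ε, Ioo_mem_nhds hr.1 hr.2, hcont₁.aestronglyMeasurable measurableSet_Ioo⟩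
      · exact hcont₁.continuousAt (Ioo_mem_nhds hr.1 hr.2)
    have hd2 : HasDerivAt (fun u : ℝ => (∫ s in Ioc (0:ℝ) a, η₁ s) + ∫ s in a..u, η₁ s)
        (η₁ r) r := hd.const_add _
    refine hd2.congr_of_eventuallyEq ?_
    filter_upwards [hnhds] with u hu
    have hu' : u ∈ Ioo (0:ℝ) ε := ⟨lt_trans ha.1 hu.1, hu.2⟩
    have h1 : IntegrableOn η₁ (Ioc 0 a) := hInt a ha
    have h2 : IntegrableOn η₁ (Ioc a u) :=
      (hInt u hu').mono_set (fun s hs => ⟨lt_trans ha.1 hs.1, hs.2⟩)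
    rw [intervalIntegral.integral_of_le hu.1.le,
      ← setIntegral_union (Set.Ioc_disjoint_Ioc_of_le le_rfl) measurableSet_Ioc h1 h2,
      Set.Ioc_union_Ioc_eq_Ioc ha.1.le hu.1.le]
  -- Part 2: dΓ σ = η₀
  have hDGamma : ∀ r ∈ Ioo (0 : ℝ) ε, dΓ 1 (∫ s in Ioc (0 : ℝ) r, η₁ s) = η₀ r := by
    set φ : ℝ → A 2 := fun u => dΓ 1 (∫ s in Ioc (0:ℝ) u, η₁ s) - η₀ u with hφ_def
    have hφderiv : ∀ u ∈ Ioo (0:ℝ) ε, HasDerivAt φ 0 u := by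
      intro u hu
      have h1 : HasDerivAt (fun u : ℝ => dΓ 1 (∫ s in Ioc (0:ℝ) u, η₁ s)) (dΓ 1 (η₁ u)) u :=
        (dΓ 1).hasFDerivAt.comp_hasDerivAt u (hDeriv u hu)
      have h2 := h1.sub (hclosed₁ u hu)
      rw [sub_self] at h2
      exact h2
    have hconst : ∀ r ∈ Ioo (0:ℝ) ε, ∀ a ∈ Ioo (0:ℝ) ε, φ r = φ a := by
      intro r hr a ha
      have huIcc : Set.uIcc a r ⊆ Ioo (0:ℝ) ε :=
        Set.OrdConnected.uIcc_subset Set.ordConnected_Ioo ha hr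
      have := intervalIntegral.integral_eq_sub_of_hasDerivAt
        (f := φ) (f' := fun _ => (0 : A 2)) (a := a) (b := r)
        (fun u hu => hφderiv u (huIcc hu)) intervalIntegrable_const
      simp only [intervalIntegral.integral_const, smul_zero] at this
      exact (sub_eq_zero.mp this.symm)
    intro r hr
    have hevIoo : Ioo (0:ℝ) ε ∈ nhdsWithin (0:ℝ) (Ioi 0) :=
      Ioo_mem_nhdsGT_of_mem ⟨le_refl 0, hε⟩
    have key1 : Filter.Tendsto φ (nhdsWithin (0:ℝ) (Ioi 0)) (nhds 0) := by
      have hg : Filter.Tendsto (fun a : ℝ => (‖dΓ 1‖ * C + C) * a ^ (ν + 2))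
          (nhdsWithin (0:ℝ) (Ioi 0)) (nhds 0) := by
        have h0 : Filter.Tendsto (fun a : ℝ => a ^ (ν + 2)) (nhds 0) (nhds 0) := by
          have := (Real.continuousAt_rpow_const 0 (ν + 2) (Or.inr (by positivity))).tendsto
          simpa [Real.zero_rpow (by positivity : ν + 2 ≠ 0)] using this
        simpa using (h0.const_mul (‖dΓ 1‖ * C + C)).mono_left nhdsWithin_le_nhds
      refine squeeze_zero_norm' ?_ hg
      filter_upwards [hevIoo] with a ha
      calc ‖φ a‖ ≤ ‖dΓ 1 (∫ s in Ioc (0:ℝ) a, η₁ s)‖ + ‖η₀ a‖ := norm_sub_le _ _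
        _ ≤ ‖dΓ 1‖ * ‖∫ s in Ioc (0:ℝ) a, η₁ s‖ + ‖η₀ a‖ := by
            gcongr; exact (dΓ 1).le_opNorm _
        _ ≤ ‖dΓ 1‖ * (C * a ^ (ν + 2)) + C * a ^ (ν + 2) := by
            gcongr
            · exact hbound a ha
            · exact hdecay₀ a ha
        _ = (‖dΓ 1‖ * C + C) * a ^ (ν + 2) := by ring
    have key2 : Filter.Tendsto φ (nhdsWithin (0:ℝ) (Ioi 0)) (nhds (φ r)) := by
      refine Filter.Tendsto.congr' ?_ tendsto_const_nhds
      filter_upwards [hevIoo] with a ha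
      exact hconst r hr a ha
    have : φ r = 0 := tendsto_nhds_unique key2 key1
    simpa [hφ_def, sub_eq_zero] using this
  exact ⟨hInt, hDGamma, hDeriv, C, hbound⟩
end
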